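/- The raise operator preserves μ and strictly increases the discernment factor: for A ∈ μ with some column whose 1 is not in the last row (or some empty column), the raised matrix R̂A obtained by incrementing by one the row index of the occupied entry of the leftmost such column (or placing a 1 in position (0,0) if A = V) satisfies R̂A ∈ μ and D(R̂A) > D(A). -/

import Mathlib

/-!
Only column `y` changes. Since the column sums are at most one, column `y` of `A` is
empty or a single `1` above the last row, and the raised column is a single `1` in a row
of strictly larger weight `η` (or in row `0`, where `η > 0`, if the column was empty).
So the numerator of `D` grows while its positive denominator is unchanged.
-/

open Finset

/-- The discernment factor `D(A)` with coefficients `η i j = m (j+1) + i + b`. -/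
noncomputable def discern (M N : ℕ) (m b : ℝ) (A : Fin (M + 1) → Fin (N + 1) → ℝ) : ℝ :=
  (∑ i : Fin (M + 1), ∑ j : Fin (N + 1), (m * ((j : ℝ) + 1) + (i : ℝ) + b) * A i j) /
    (∑ j : Fin (N + 1), (m * ((j : ℝ) + 1) + (M : ℝ) + b))

def eta (m b : ℝ) (i j : ℕ) : ℝ := m * ((j : ℝ) + 1) + i + b

lemma eta_pos {m b : ℝ} (hm : 0 ≤ m) (hb : 0 < b) (i j : ℕ) : 0 < eta m b i j := by
  unfold eta; positivity

lemma eta_strictMono_left (m b : ℝ) (j : ℕ) : StrictMono fun i : ℕ => eta m b i j := by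
  intro i i' h
  simp only [eta]
  gcongr

lemma discern_eq {M N : ℕ} (m b : ℝ) (A : Fin (M + 1) → Fin (N + 1) → ℝ) :
    discern M N m b A =
      (∑ j : Fin (N + 1), ∑ i : Fin (M + 1), eta m b i j * A i j) /
        ∑ j : Fin (N + 1), eta m b M j := by
  rw [discern, Finset.sum_comm]
  rfl

lemma discern_lt_discern_of_column {M N : ℕ} {m b : ℝ} (hm : 0 ≤ m) (hb : 0 < b)
    {A R : Fin (M + 1) → Fin (N + 1) → ℝ} (y : Fin (N + 1))
    (hout : ∀ i j, j ≠ y → R i j = A i j)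
    (hy : ∑ i : Fin (M + 1), eta m b i y * A i y < ∑ i : Fin (M + 1), eta m b i y * R i y) :
    discern M N m b A < discern M N m b R := by
  rw [discern_eq, discern_eq]
  refine div_lt_div_of_pos_right ?_ (Finset.sum_pos (fun j _ => eta_pos hm hb _ _) univ_nonempty)
  refine Finset.sum_lt_sum (fun j _ => ?_) ⟨y, mem_univ y, hy⟩
  by_cases hj : j = y
  · subst hj; exact hy.le
  · simp only [hout _ j hj, le_refl]

lemma eq_ite_of_sum_le_one {ι : Type*} [Fintype ι] [DecidableEq ι] {a : ι → ℝ}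
    (h01 : ∀ i, a i = 0 ∨ a i = 1) (hsum : ∑ i, a i ≤ 1) {t : ι} (ht : a t = 1) (i : ι) :
    a i = if i = t then 1 else 0 := by
  split_ifs with hit
  · rw [hit, ht]
  refine (h01 i).resolve_right fun hi => ?_
  have hpair : ∑ k ∈ {i, t}, a k ≤ ∑ k, a k :=
    Finset.sum_le_sum_of_subset_of_nonneg (subset_univ _)
      fun k _ _ => by rcases h01 k with h | h <;> simp [h]
  rw [Finset.sum_pair hit, hi, ht] at hpair
  linarith

lemma exists_raise_column {M : ℕ} {a r w : Fin (M + 1) → ℝ}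
    (h01 : ∀ i, a i = 0 ∨ a i = 1) (hsum : ∑ i, a i ≤ 1) (hlast : a (Fin.last M) ≠ 1)
    (hempty : (∀ i, a i = 0) → ∀ i, r i = if i = 0 then 1 else 0)
    (hocc : ∀ q : Fin M, a q.castSucc = 1 → ∀ i, r i = if i = q.succ then 1 else 0)
    (hw0 : 0 < w 0) (hw : StrictMono w) :
    ∃ t, (∀ i, r i = if i = t then 1 else 0) ∧ ∑ i, w i * a i < ∑ i, w i * r i := by
  by_cases h : ∀ i, a i = 0
  · refine ⟨0, hempty h, ?_⟩
    simpa [h, hempty h] using hw0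
  obtain ⟨p, hp⟩ := not_forall.mp h
  have hp1 : a p = 1 := (h01 p).resolve_left hp
  obtain ⟨q, rfl⟩ : ∃ q : Fin M, q.castSucc = p :=
    Fin.exists_castSucc_eq.mpr fun e => hlast (e ▸ hp1)
  have ha := eq_ite_of_sum_le_one h01 hsum hp1
  refine ⟨q.succ, hocc q hp1, ?_⟩
  simpa [ha, hocc q hp1] using hw (Fin.castSucc_lt_succ (i := q))

theorem raise_mem_mu_and_discern_lt_general (M N : ℕ) (m b : ℝ) (hm : 0 < m) (hb : 0 < b)
    (A : Fin (M + 1) → Fin (N + 1) → ℝ)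
    (h01 : ∀ i j, A i j = 0 ∨ A i j = 1)
    (hcol : ∀ j, ∑ i, A i j ≤ 1)
    (y : Fin (N + 1))
    (hy : A (Fin.last M) y ≠ 1)
    (R : Fin (M + 1) → Fin (N + 1) → ℝ)
    (hRout : ∀ i j, j ≠ y → R i j = A i j)
    (hRempty : (∀ i, A i y = 0) →
      ∀ i : Fin (M + 1), R i y = if i = (0 : Fin (M + 1)) then 1 else 0)
    (hRocc : ∀ q : Fin M, A q.castSucc y = 1 →
      ∀ i : Fin (M + 1), R i y = if i = q.succ then 1 else 0) :
    (∀ i j, R i j = 0 ∨ R i j = 1) ∧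
    (∀ j, ∑ i, R i j ≤ 1) ∧
    discern M N m b A < discern M N m b R := by
  obtain ⟨t, hRy, hlt⟩ := exists_raise_column (fun i => h01 i y) (hcol y) hy hRempty hRocc
    (eta_pos hm.le hb 0 y) ((eta_strictMono_left m b y).comp Fin.val_strictMono)
  refine ⟨fun i j => ?_, fun j => ?_, discern_lt_discern_of_column hm.le hb y hRout hlt⟩
  · by_cases hj : j = y
    · subst hj; rw [hRy]; split_ifs <;> simp
    · rw [hRout i j hj]; exact h01 i j
  · by_cases hj : j = y
    · subst hj; simp [hRy]
    · simpa only [hRout _ j hj] using hcol j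

/-- the raise operator preserves `μ` and strictly increases the
discernment factor. Here `y` is the leftmost column of `A` whose `1` is not in the
last row (possibly an empty column; if `A = V` this is column `0` and `R̂A` places a
`1` at `(0,0)`), and `R` is the raised matrix: equal to `A` outside column `y`, and in
column `y` the occupied entry is moved one row down (or a `1` is placed at row `0` if
the column is empty). -/
theorem raise_mem_mu_and_discern_lt (M N : ℕ) (m b : ℝ) (hm : 0 < m) (hb : 0 < b)
    (A : Fin (M + 1) → Fin (N + 1) → ℝ)
    (h01 : ∀ i j, A i j = 0 ∨ A i j = 1)
    (hcol : ∀ j, ∑ i, A i j ≤ 1)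
    (y : Fin (N + 1))
    (hy : A (Fin.last M) y ≠ 1)
    (hleft : ∀ y' : Fin (N + 1), y' < y → A (Fin.last M) y' = 1)
    (R : Fin (M + 1) → Fin (N + 1) → ℝ)
    (hRout : ∀ i j, j ≠ y → R i j = A i j)
    (hRempty : (∀ i, A i y = 0) →
      ∀ i : Fin (M + 1), R i y = if i = (0 : Fin (M + 1)) then 1 else 0)
    (hRocc : ∀ q : Fin M, A q.castSucc y = 1 →
      ∀ i : Fin (M + 1), R i y = if i = q.succ then 1 else 0) :
    (∀ i j, R i j = 0 ∨ R i j = 1) ∧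
    (∀ j, ∑ i, R i j ≤ 1) ∧
    discern M N m b A < discern M N m b R :=
  raise_mem_mu_and_discern_lt_general M N m b hm hb A h01 hcol y hy R hRout hRempty hRocc
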